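/- arXiv:2602.21711 — 4 statements merged into one kernel-verified Lean document; each statement's English description precedes it below -/
import Mathlib

section
/- The effective weight matrix W̃ = W − W Z (Zᵀ W Z + D⁻¹)⁻¹ Zᵀ W is positive semidefinite. -/
open Matrix

/-- Lemma 1 of the paper (positive semidefiniteness part): the effective weight
matrix `W̃ = W − W Z (Zᵀ W Z + D⁻¹)⁻¹ Zᵀ W` is positive semidefinite, where `W`
is a `T×T` diagonal matrix with diagonal entries in `[0,1]`, `Z` is `T×q`, and
`D` is a `q×q` symmetric positive definite matrix. -/
theorem effective_weight_posSemidef (T q : ℕ) (hT : 0 < T) (hq : 0 < q)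
    (W : Matrix (Fin T) (Fin T) ℝ) (w : Fin T → ℝ)
    (hW : W = Matrix.diagonal w) (hw : ∀ i, 0 ≤ w i ∧ w i ≤ 1)
    (Z : Matrix (Fin T) (Fin q) ℝ)
    (D : Matrix (Fin q) (Fin q) ℝ) (hD : D.PosDef) :
    (W - W * Z * (Zᵀ * W * Z + D⁻¹)⁻¹ * Zᵀ * W).PosSemidef := by
  set S : Matrix (Fin T) (Fin T) ℝ := Matrix.diagonal (fun i => Real.sqrt (w i)) with hSdef
  have hS : Sᵀ = S := Matrix.diagonal_transpose _
  have hSH : Sᴴ = S := by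
    simpa using hS
  have hSS : S * S = W := by
    have h : (fun i => Real.sqrt (w i) * Real.sqrt (w i)) = w :=
      funext fun i => Real.mul_self_sqrt (hw i).1
    rw [hSdef, Matrix.diagonal_mul_diagonal, h, hW]
  set A : Matrix (Fin T) (Fin q) ℝ := S * Z with hA
  have hAtA : Aᵀ * A = Zᵀ * W * Z := by
    rw [hA, Matrix.transpose_mul, hS]
    rw [Matrix.mul_assoc, ← Matrix.mul_assoc S S Z, hSS, ← Matrix.mul_assoc]
  have hSA : S * A = W * Z := by
    rw [hA, ← Matrix.mul_assoc, hSS]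
  have hAS : Aᵀ * S = Zᵀ * W := by
    rw [hA, Matrix.transpose_mul, hS, Matrix.mul_assoc, hSS]
  -- positive definiteness of 1 + A * D * Aᵀ
  have hADA : (A * D * Aᵀ).PosSemidef := by
    have := hD.posSemidef.mul_mul_conjTranspose_same A
    simpa [Matrix.conjTranspose_eq_transpose_of_trivial] using this
  have hPD : (1 + A * D * Aᵀ).PosDef := Matrix.PosDef.add_posSemidef Matrix.PosDef.one hADA
  -- Woodbury
  have hDinvAA : (D⁻¹ + Aᵀ * A).PosDef :=
    Matrix.PosDef.add_posSemidef hD.inv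
      (by simpa [Matrix.conjTranspose_eq_transpose_of_trivial] using
        Matrix.posSemidef_conjTranspose_mul_self A)
  have hwood : (1 + A * D * Aᵀ)⁻¹ = 1 - A * (D⁻¹ + Aᵀ * A)⁻¹ * Aᵀ := by
    have := Matrix.add_mul_mul_inv_eq_sub (1 : Matrix (Fin T) (Fin T) ℝ) A D Aᵀ
      isUnit_one hD.isUnit (by simpa using hDinvAA.isUnit)
    simpa using this
  have hM : Zᵀ * W * Z + D⁻¹ = D⁻¹ + Aᵀ * A := by rw [hAtA, add_comm]
  have heq : W - W * Z * (Zᵀ * W * Z + D⁻¹)⁻¹ * Zᵀ * W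
      = S * (1 + A * D * Aᵀ)⁻¹ * Sᴴ := by
    rw [hSH, hwood, hM, Matrix.mul_sub, Matrix.sub_mul, Matrix.mul_one, hSS]
    congr 1
    simp only [← Matrix.mul_assoc]
    rw [hSA, Matrix.mul_assoc _ Aᵀ S, hAS]
    simp only [← Matrix.mul_assoc]
  rw [heq]
  exact hPD.inv.posSemidef.mul_mul_conjTranspose_same S
end

section
/- The effective weight matrix satisfies W̃ ⪯ I in the Loewner order; that is, I − W̃ is positive semidefinite, and consequently vᵀ W̃ v ≤ ‖v‖₂² for every v ∈ ℝᵀ. -/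
/-!
Since `0 ⪯ W ⪯ I`, the matrix `M = Zᵀ W Z + D⁻¹` is positive semidefinite, hence so are `M⁻¹`
and its congruence `(W Z) M⁻¹ (W Z)ᵀ`, which is the term subtracted from `W`. Thus `W̃ ⪯ W ⪯ I`
in the Loewner order, and the quadratic-form bound is `vᵀ (I − W̃) v ≥ 0`.
-/

open Matrix
open scoped MatrixOrder ComplexOrder

namespace Matrix

variable {m n 𝕜 : Type*} [RCLike 𝕜]

theorem diagonal_le_one [DecidableEq n] {w : n → 𝕜} (hw : ∀ i, w i ≤ 1) : diagonal w ≤ 1 := by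
  rw [le_iff, ← diagonal_one, diagonal_sub, posSemidef_diagonal_iff]
  exact fun i => sub_nonneg.mpr (hw i)

variable [Fintype m] [Fintype n]

theorem dotProduct_mulVec_le_of_le {A B : Matrix n n 𝕜} (h : A ≤ B) (x : n → 𝕜) :
    star x ⬝ᵥ (A *ᵥ x) ≤ star x ⬝ᵥ (B *ᵥ x) := by
  have := (le_iff.mp h).dotProduct_mulVec_nonneg x
  rwa [sub_mulVec, dotProduct_sub, sub_nonneg] at this

theorem sub_mul_mul_inv_add_mul_mul_le [DecidableEq m] {W : Matrix n n 𝕜} (hW : W.PosSemidef)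
    (Z : Matrix n m 𝕜) {S : Matrix m m 𝕜} (hS : S.PosSemidef) :
    W - W * Z * (Zᴴ * W * Z + S)⁻¹ * Zᴴ * W ≤ W := by
  have hM : (Zᴴ * W * Z + S).PosSemidef := (hW.conjTranspose_mul_mul_same Z).add hS
  have hB := hM.inv.mul_mul_conjTranspose_same (W * Z)
  rw [conjTranspose_mul, hW.isHermitian.eq, ← Matrix.mul_assoc] at hB
  exact sub_le_self _ hB.nonneg

end Matrix

theorem effective_weight_le_one_general (T q : ℕ)
    (W : Matrix (Fin T) (Fin T) ℝ) (w : Fin T → ℝ)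
    (hW : W = Matrix.diagonal w) (hw : ∀ i, 0 ≤ w i ∧ w i ≤ 1)
    (Z : Matrix (Fin T) (Fin q) ℝ)
    (D : Matrix (Fin q) (Fin q) ℝ) (hD : D.PosDef) :
    (1 - (W - W * Z * (Zᵀ * W * Z + D⁻¹)⁻¹ * Zᵀ * W)).PosSemidef ∧
      ∀ v : Fin T → ℝ,
        v ⬝ᵥ ((W - W * Z * (Zᵀ * W * Z + D⁻¹)⁻¹ * Zᵀ * W) *ᵥ v) ≤ ∑ i, (v i) ^ 2 := by
  subst hW
  have hW : (diagonal w).PosSemidef := posSemidef_diagonal_iff.mpr fun i => (hw i).1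
  have hle : diagonal w - diagonal w * Z * (Zᵀ * diagonal w * Z + D⁻¹)⁻¹ * Zᵀ * diagonal w ≤ 1 :=
    (sub_mul_mul_inv_add_mul_mul_le hW Z hD.posSemidef.inv).trans
      (diagonal_le_one fun i => (hw i).2)
  refine ⟨le_iff.mp hle, fun v => ?_⟩
  simpa [dotProduct, sq] using dotProduct_mulVec_le_of_le hle v

/-- Lemma 1 of the paper (operator-norm bound part, restated via the Loewner
order): the effective weight matrix `W̃ = W − W Z (Zᵀ W Z + D⁻¹)⁻¹ Zᵀ W`
satisfies `W̃ ⪯ I`, i.e. `I − W̃` is positive semidefinite, and consequently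
`vᵀ W̃ v ≤ ‖v‖₂²` for every `v ∈ ℝᵀ`. -/
theorem effective_weight_le_one (T q : ℕ) (hT : 0 < T) (hq : 0 < q)
    (W : Matrix (Fin T) (Fin T) ℝ) (w : Fin T → ℝ)
    (hW : W = Matrix.diagonal w) (hw : ∀ i, 0 ≤ w i ∧ w i ≤ 1)
    (Z : Matrix (Fin T) (Fin q) ℝ)
    (D : Matrix (Fin q) (Fin q) ℝ) (hD : D.PosDef) :
    (1 - (W - W * Z * (Zᵀ * W * Z + D⁻¹)⁻¹ * Zᵀ * W)).PosSemidef ∧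
      ∀ v : Fin T → ℝ,
        v ⬝ᵥ ((W - W * Z * (Zᵀ * W * Z + D⁻¹)⁻¹ * Zᵀ * W) *ᵥ v) ≤ ∑ i, (v i) ^ 2 :=
  effective_weight_le_one_general T q W w hW hw Z D hD
end

section
/- Deterministic ℓ2 estimation bound (core of Theorem 1): let β̂ be a global minimizer over ℝᵖ of Q(β) = L(β) + λ ‖β‖₁ with λ > 0. Assume: (i) β*_j = 0 for all j ∉ S where |S| = s ≥ 1; (ii) λ ≥ 2 ‖ξ‖_∞; (iii) restricted strong convexity: Δᵀ G Δ ≥ α ‖Δ‖₂² − κ ‖Δ‖₁² for all Δ with ‖Δ_{S^c}‖₁ ≤ 3‖Δ_S‖₁, where α > 0 and κ ≥ 0; and (iv) 16 κ s ≤ α/2. Then ‖β̂ − β*‖₂ ≤ 6 λ √s / α. -/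
/-!
For `Δ = β̂ − β*` the quadratic loss expands exactly:
`L(β̂) = L(β*) + ⟨ξ, Δ⟩ + ΔᵀGΔ/2`. Minimality of `β̂`, Hölder with `λ ≥ 2‖ξ‖_∞` and the
decomposability of the ℓ1 norm over the support `S` give the basic inequality
`ΔᵀGΔ + λ‖Δ_{Sᶜ}‖₁ ≤ 3λ‖Δ_S‖₁`. As `G` is positive semidefinite, `Δ` lies in the cone, so
restricted strong convexity, `‖Δ‖₁ ≤ 4‖Δ_S‖₁ ≤ 4√s‖Δ‖₂` and `16κs ≤ α/2` give
`(α/2)‖Δ‖₂² ≤ ΔᵀGΔ ≤ 3λ√s‖Δ‖₂`.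
-/

open Matrix

theorem residual_quadForm_expand {m n R : Type*} [Fintype m] [Fintype n] [CommRing R]
    {W : Matrix m m R} (hW : W.IsSymm) (X : Matrix m n R) (r : m → R) (Δ : n → R) :
    (r - X *ᵥ Δ) ⬝ᵥ (W *ᵥ (r - X *ᵥ Δ)) =
      r ⬝ᵥ (W *ᵥ r) - 2 * ((Xᵀ *ᵥ (W *ᵥ r)) ⬝ᵥ Δ) + Δ ⬝ᵥ ((Xᵀ * W * X) *ᵥ Δ) := by
  have hpull : ∀ (u : m → R) (v : n → R), (Xᵀ *ᵥ u) ⬝ᵥ v = u ⬝ᵥ (X *ᵥ v) := fun u v => by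
    rw [mulVec_transpose, ← dotProduct_mulVec]
  have hcross₁ : (X *ᵥ Δ) ⬝ᵥ (W *ᵥ r) = (Xᵀ *ᵥ (W *ᵥ r)) ⬝ᵥ Δ := by
    rw [hpull, dotProduct_comm]
  have hcross₂ : r ⬝ᵥ (W *ᵥ (X *ᵥ Δ)) = (Xᵀ *ᵥ (W *ᵥ r)) ⬝ᵥ Δ := by
    rw [dotProduct_mulVec, ← mulVec_transpose, hW.eq, dotProduct_comm, hcross₁]
  have hquad : (X *ᵥ Δ) ⬝ᵥ (W *ᵥ (X *ᵥ Δ)) = Δ ⬝ᵥ ((Xᵀ * W * X) *ᵥ Δ) := by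
    rw [← mulVec_mulVec, ← mulVec_mulVec, dotProduct_comm Δ, hpull, dotProduct_comm]
  rw [mulVec_sub, dotProduct_sub, sub_dotProduct, sub_dotProduct, hcross₂, hcross₁, hquad]
  ring

theorem le_div_of_mul_sq_le_mul {u c α : ℝ} (hα : 0 < α) (hu : 0 ≤ u) (hc : 0 ≤ c)
    (h : α * u ^ 2 ≤ c * u) :
    u ≤ c / α := by
  rw [le_div_iff₀ hα]
  rcases hu.eq_or_lt with rfl | hu
  · simpa using hc
  · nlinarith

theorem weightedLoss_add {N : ℕ} {n : Type*} [Fintype n] {X : Matrix (Fin N) n ℝ}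
    {Wt : Matrix (Fin N) (Fin N) ℝ} (hW : Wt.IsSymm) {Y : Fin N → ℝ} {L : (n → ℝ) → ℝ}
    (hL : ∀ β, L β = (1 / (2 * (N : ℝ))) * ((Y - X *ᵥ β) ⬝ᵥ (Wt *ᵥ (Y - X *ᵥ β))))
    {β ξ : n → ℝ} (hξ : ξ = (-(1 / (N : ℝ))) • (Xᵀ *ᵥ (Wt *ᵥ (Y - X *ᵥ β))))
    {G : Matrix n n ℝ} (hG : G = (1 / (N : ℝ)) • (Xᵀ * Wt * X)) (Δ : n → ℝ) :
    L (β + Δ) = L β + ξ ⬝ᵥ Δ + Δ ⬝ᵥ (G *ᵥ Δ) / 2 := by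
  rw [hL, hL, hξ, hG, mulVec_add, sub_add_eq_sub_sub, residual_quadForm_expand hW, smul_mulVec,
    smul_dotProduct, dotProduct_smul, smul_eq_mul, smul_eq_mul]
  ring

section Lasso

variable {ι : Type*} [Fintype ι]

theorem abs_dotProduct_le_norm_mul_sum_abs (ξ Δ : ι → ℝ) :
    |ξ ⬝ᵥ Δ| ≤ ‖ξ‖ * ∑ j, |Δ j| :=
  calc |ξ ⬝ᵥ Δ| ≤ ∑ j, |ξ j| * |Δ j| := by
        simpa only [dotProduct, abs_mul] using Finset.abs_sum_le_sum_abs (fun j => ξ j * Δ j) _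
    _ ≤ ∑ j, ‖ξ‖ * |Δ j| := by
        gcongr with j
        exact norm_le_pi_norm ξ j
    _ = ‖ξ‖ * ∑ j, |Δ j| := (Finset.mul_sum _ _ _).symm

theorem sq_sum_abs_le_card_mul_sum_sq (S : Finset ι) (Δ : ι → ℝ) :
    (∑ j ∈ S, |Δ j|) ^ 2 ≤ (S.card : ℝ) * ∑ j, Δ j ^ 2 :=
  calc (∑ j ∈ S, |Δ j|) ^ 2 ≤ (S.card : ℝ) * ∑ j ∈ S, |Δ j| ^ 2 := sq_sum_le_card_mul_sum_sq
    _ ≤ S.card * ∑ j, Δ j ^ 2 := by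
        simp only [sq_abs]
        exact mul_le_mul_of_nonneg_left
          (Finset.sum_le_sum_of_subset_of_nonneg S.subset_univ fun j _ _ => sq_nonneg (Δ j))
          S.card.cast_nonneg

variable [DecidableEq ι] {S : Finset ι}

theorem sum_abs_sub_sum_abs_add_le {β : ι → ℝ}
    (hsupp : ∀ j ∉ S, β j = 0) (Δ : ι → ℝ) :
    ∑ j, |β j| - ∑ j, |(β + Δ) j| ≤ ∑ j ∈ S, |Δ j| - ∑ j ∈ Sᶜ, |Δ j| := by
  rw [← Finset.sum_add_sum_compl S, ← Finset.sum_add_sum_compl S (fun j => |(β + Δ) j|)]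
  have hoff : ∀ j ∈ Sᶜ, |β j| = 0 ∧ |(β + Δ) j| = |Δ j| := fun j hj => by
    simp [hsupp j (Finset.mem_compl.mp hj)]
  rw [Finset.sum_congr rfl fun j hj => (hoff j hj).1,
    Finset.sum_congr rfl fun j hj => (hoff j hj).2]
  have hon : ∑ j ∈ S, |β j| - ∑ j ∈ S, |(β + Δ) j| ≤ ∑ j ∈ S, |Δ j| := by
    rw [← Finset.sum_sub_distrib]
    gcongr with j
    simpa using abs_sub_abs_le_abs_sub (β j) (β j + Δ j)
  simp only [Finset.sum_const_zero]
  linarith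

theorem lasso_basic_inequality {L : (ι → ℝ) → ℝ} {ξ β Δ : ι → ℝ} {q lam : ℝ}
    (hL : L (β + Δ) = L β + ξ ⬝ᵥ Δ + q / 2) (hsupp : ∀ j ∉ S, β j = 0)
    (hlamξ : 2 * ‖ξ‖ ≤ lam)
    (hmin : L (β + Δ) + lam * ∑ j, |(β + Δ) j| ≤ L β + lam * ∑ j, |β j|) :
    q + lam * ∑ j ∈ Sᶜ, |Δ j| ≤ 3 * lam * ∑ j ∈ S, |Δ j| := by
  have hlam : 0 ≤ lam := by linarith [norm_nonneg ξ]
  have hl1 : ∑ j, |Δ j| = ∑ j ∈ S, |Δ j| + ∑ j ∈ Sᶜ, |Δ j| := (Finset.sum_add_sum_compl S _).symm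
  have hscore : -(ξ ⬝ᵥ Δ) ≤ lam / 2 * ∑ j, |Δ j| :=
    calc -(ξ ⬝ᵥ Δ) ≤ ‖ξ‖ * ∑ j, |Δ j| :=
          (neg_le_abs _).trans (abs_dotProduct_le_norm_mul_sum_abs ξ Δ)
      _ ≤ lam / 2 * ∑ j, |Δ j| :=
          mul_le_mul_of_nonneg_right (by linarith) (Finset.sum_nonneg fun j _ => abs_nonneg _)
  have hpenalty := mul_le_mul_of_nonneg_left (sum_abs_sub_sum_abs_add_le hsupp Δ) hlam
  rw [mul_sub, mul_sub] at hpenalty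
  rw [hl1, mul_add] at hscore
  linarith

theorem sqrt_sum_sq_le_of_lasso_basic_inequality {Δ : ι → ℝ} {q lam α κ : ℝ}
    (hlam : 0 < lam) (hα : 0 < α) (hκ : 0 ≤ κ) (hq : 0 ≤ q)
    (hbasic : q + lam * ∑ j ∈ Sᶜ, |Δ j| ≤ 3 * lam * ∑ j ∈ S, |Δ j|)
    (hRSC : ∑ j ∈ Sᶜ, |Δ j| ≤ 3 * ∑ j ∈ S, |Δ j| →
      α * ∑ j, Δ j ^ 2 - κ * (∑ j, |Δ j|) ^ 2 ≤ q)
    (hκs : 16 * κ * S.card ≤ α / 2) :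
    √(∑ j, Δ j ^ 2) ≤ 6 * lam * √S.card / α := by
  set a := ∑ j ∈ S, |Δ j|
  set b := ∑ j ∈ Sᶜ, |Δ j|
  set T := ∑ j, Δ j ^ 2
  have ha : 0 ≤ a := Finset.sum_nonneg fun j _ => abs_nonneg _
  have hb : 0 ≤ b := Finset.sum_nonneg fun j _ => abs_nonneg _
  have hT : 0 ≤ T := Finset.sum_nonneg fun j _ => sq_nonneg _
  have hcone : b ≤ 3 * a := le_of_mul_le_mul_left (by linarith) hlam
  have hl1 : (∑ j, |Δ j|) ^ 2 ≤ 16 * (S.card * T) := by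
    rw [← Finset.sum_add_sum_compl S]
    nlinarith [sq_sum_abs_le_card_mul_sum_sq S Δ]
  have hcurv : α / 2 * T ≤ q := by
    have := hRSC hcone
    nlinarith [mul_le_mul_of_nonneg_left hl1 hκ, mul_le_mul_of_nonneg_right hκs hT]
  have hCS : a ≤ √S.card * √T := by
    rw [← Real.sqrt_mul S.card.cast_nonneg]
    exact (Real.le_sqrt ha (by positivity)).mpr (sq_sum_abs_le_card_mul_sum_sq S Δ)
  refine le_div_of_mul_sq_le_mul hα (Real.sqrt_nonneg T) (by positivity) ?_
  rw [Real.sq_sqrt hT]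
  nlinarith [mul_le_mul_of_nonneg_left hCS hlam.le]

end Lasso

theorem deterministic_l2_estimation_bound_general (N p s : ℕ)
    (X : Matrix (Fin N) (Fin p) ℝ)
    (Wt : Matrix (Fin N) (Fin N) ℝ) (hWt : Wt.PosSemidef)
    (Y : Fin N → ℝ) (βstar : Fin p → ℝ)
    (L : (Fin p → ℝ) → ℝ)
    (hL : ∀ β, L β = (1 / (2 * (N : ℝ))) *
      ((Y - X *ᵥ β) ⬝ᵥ (Wt *ᵥ (Y - X *ᵥ β))))
    (ξ : Fin p → ℝ)
    (hξ : ξ = (-(1 / (N : ℝ))) • (Xᵀ *ᵥ (Wt *ᵥ (Y - X *ᵥ βstar))))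
    (G : Matrix (Fin p) (Fin p) ℝ)
    (hG : G = (1 / (N : ℝ)) • (Xᵀ * Wt * X))
    (S : Finset (Fin p)) (hcard : S.card = s)
    (hsupp : ∀ j ∉ S, βstar j = 0)
    (lam α κ : ℝ) (hlam : 0 < lam) (hα : 0 < α) (hκ : 0 ≤ κ)
    (hlamξ : 2 * ‖ξ‖ ≤ lam)
    (hRSC : ∀ Δ : Fin p → ℝ, (∑ j ∈ Sᶜ, |Δ j|) ≤ 3 * (∑ j ∈ S, |Δ j|) →
      α * (∑ j, (Δ j) ^ 2) - κ * (∑ j, |Δ j|) ^ 2 ≤ Δ ⬝ᵥ (G *ᵥ Δ))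
    (hκs : 16 * κ * s ≤ α / 2)
    (βhat : Fin p → ℝ)
    (hmin : ∀ β : Fin p → ℝ,
      L βhat + lam * (∑ j, |βhat j|) ≤ L β + lam * (∑ j, |β j|)) :
    Real.sqrt (∑ j, (βhat j - βstar j) ^ 2) ≤ 6 * lam * Real.sqrt s / α := by
  set Δ := βhat - βstar
  have hβhat : βstar + Δ = βhat := add_sub_cancel βstar βhat
  have hG_psd : G.PosSemidef := by
    rw [hG, ← conjTranspose_eq_transpose_of_trivial]
    exact (hWt.conjTranspose_mul_mul_same X).smul (by positivity)
  have hq : 0 ≤ Δ ⬝ᵥ (G *ᵥ Δ) := by simpa using hG_psd.dotProduct_mulVec_nonneg Δ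
  have hexp := weightedLoss_add (isHermitian_iff_isSymm.mp hWt.isHermitian) hL hξ hG Δ
  have hbasic := lasso_basic_inequality hexp hsupp hlamξ (hβhat ▸ hmin βstar)
  subst hcard
  exact sqrt_sum_sq_le_of_lasso_basic_inequality hlam hα hκ hq hbasic (hRSC Δ) hκs

/-- Deterministic ℓ2 estimation bound (core of Theorem 1 of the paper).
Let `L(β) = (1/(2N)) (Y − Xβ)ᵀ W̃ (Y − Xβ)` with score
`ξ = −(1/N) Xᵀ W̃ (Y − Xβ*)` and Gram matrix `G = (1/N) Xᵀ W̃ X`, and let `β̂`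
be a global minimizer of `Q(β) = L(β) + λ‖β‖₁`.  If `β*` is supported on `S`
with `|S| = s ≥ 1`, `λ ≥ 2‖ξ‖_∞`, restricted strong convexity
`Δᵀ G Δ ≥ α‖Δ‖₂² − κ‖Δ‖₁²` holds on the cone `‖Δ_{S^c}‖₁ ≤ 3‖Δ_S‖₁` with
`α > 0`, `κ ≥ 0`, and `16κs ≤ α/2`, then `‖β̂ − β*‖₂ ≤ 6λ√s/α`.
(The sup norm `‖ξ‖` below is the norm of the Pi type `Fin p → ℝ`.) -/
theorem deterministic_l2_estimation_bound (N p s : ℕ) (hN : 0 < N) (hp : 0 < p)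
    (X : Matrix (Fin N) (Fin p) ℝ)
    (Wt : Matrix (Fin N) (Fin N) ℝ) (hWt : Wt.PosSemidef)
    (Y : Fin N → ℝ) (βstar : Fin p → ℝ)
    (L : (Fin p → ℝ) → ℝ)
    (hL : ∀ β, L β = (1 / (2 * (N : ℝ))) *
      ((Y - X *ᵥ β) ⬝ᵥ (Wt *ᵥ (Y - X *ᵥ β))))
    (ξ : Fin p → ℝ)
    (hξ : ξ = (-(1 / (N : ℝ))) • (Xᵀ *ᵥ (Wt *ᵥ (Y - X *ᵥ βstar))))
    (G : Matrix (Fin p) (Fin p) ℝ)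
    (hG : G = (1 / (N : ℝ)) • (Xᵀ * Wt * X))
    (S : Finset (Fin p)) (hcard : S.card = s) (hs : 1 ≤ s)
    (hsupp : ∀ j ∉ S, βstar j = 0)
    (lam α κ : ℝ) (hlam : 0 < lam) (hα : 0 < α) (hκ : 0 ≤ κ)
    (hlamξ : 2 * ‖ξ‖ ≤ lam)
    (hRSC : ∀ Δ : Fin p → ℝ, (∑ j ∈ Sᶜ, |Δ j|) ≤ 3 * (∑ j ∈ S, |Δ j|) →
      α * (∑ j, (Δ j) ^ 2) - κ * (∑ j, |Δ j|) ^ 2 ≤ Δ ⬝ᵥ (G *ᵥ Δ))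
    (hκs : 16 * κ * s ≤ α / 2)
    (βhat : Fin p → ℝ)
    (hmin : ∀ β : Fin p → ℝ,
      L βhat + lam * (∑ j, |βhat j|) ≤ L β + lam * (∑ j, |β j|)) :
    Real.sqrt (∑ j, (βhat j - βstar j) ^ 2) ≤ 6 * lam * Real.sqrt s / α :=
  deterministic_l2_estimation_bound_general N p s X Wt hWt Y βstar L hL ξ hξ G hG S hcard hsupp lam
    α κ hlam hα hκ hlamξ hRSC hκs βhat hmin
end

section
/- Primal–dual witness strict dual feasibility: let G_SS be an invertible s×s real matrix, G_{S^cS} a (p−s)×s real matrix, ξ_S ∈ ℝˢ, ξ_{S^c} ∈ ℝ^{p−s}, z_S ∈ ℝˢ with ‖z_S‖_∞ ≤ λ_S, and suppose the incoherence condition ‖G_{S^cS} G_SS⁻¹‖_{∞→∞} ≤ 1 − η holds for some η ∈ (0,1). Then ‖ξ_{S^c} − G_{S^cS} G_SS⁻¹ (ξ_S + z_S)‖_∞ ≤ (2 − η)·max(‖ξ_S‖_∞, ‖ξ_{S^c}‖_∞) + (1 − η)·λ_S. Consequently, if λ_{S^c} > (2 − η)·max(‖ξ_S‖_∞, ‖ξ_{S^c}‖_∞)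 + (1 − η)·λ_S, then ‖ξ_{S^c} − G_{S^cS} G_SS⁻¹ (ξ_S + z_S)‖_∞ < λ_{S^c}. -/
/-!
With `M = G_{S^cS} G_SS⁻¹` the vector is `ξ_{S^c} − M (ξ_S + z_S)`. The maximum absolute row sum
is the ℓ∞→ℓ∞ operator norm, so `‖M v‖_∞ ≤ (1 − η) ‖v‖_∞`, and the triangle inequality gives
`‖ξ_{S^c}‖_∞ + (1 − η)(‖ξ_S‖_∞ + λ_S)`; bounding both noise norms by their maximum finishes.
-/

open Matrix

/-- The ℓ∞→ℓ∞ operator norm of a real matrix: the maximum absolute row sum. -/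
noncomputable def rowSumNorm {m n : ℕ} (M : Matrix (Fin m) (Fin n) ℝ) : ℝ :=
  ⨆ i, ∑ j, |M i j|

section LinftyOpNorm

attribute [local instance] Matrix.linftyOpNormedAddCommGroup

theorem rowSumNorm_eq_linfty_opNorm {m n : ℕ} (M : Matrix (Fin m) (Fin n) ℝ) :
    rowSumNorm M = ‖M‖ := by
  rw [linfty_opNorm_def, Finset.sup_univ_eq_ciSup, NNReal.coe_iSup]
  simp [rowSumNorm]

theorem rowSumNorm_nonneg {m n : ℕ} (M : Matrix (Fin m) (Fin n) ℝ) : 0 ≤ rowSumNorm M :=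
  rowSumNorm_eq_linfty_opNorm M ▸ norm_nonneg M

theorem norm_mulVec_le_rowSumNorm_mul {m n : ℕ} (M : Matrix (Fin m) (Fin n) ℝ)
    (v : Fin n → ℝ) : ‖M *ᵥ v‖ ≤ rowSumNorm M * ‖v‖ :=
  rowSumNorm_eq_linfty_opNorm M ▸ linfty_opNorm_mulVec M v

end LinftyOpNorm

theorem norm_sub_mulVec_add_le {m n : ℕ} (M : Matrix (Fin m) (Fin n) ℝ) (u : Fin m → ℝ)
    (v w : Fin n → ℝ) : ‖u - M *ᵥ (v + w)‖ ≤ ‖u‖ + rowSumNorm M * (‖v‖ + ‖w‖) :=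
  calc ‖u - M *ᵥ (v + w)‖ ≤ ‖u‖ + ‖M *ᵥ (v + w)‖ := norm_sub_le _ _
    _ ≤ ‖u‖ + rowSumNorm M * ‖v + w‖ := by gcongr; exact norm_mulVec_le_rowSumNorm_mul M _
    _ ≤ ‖u‖ + rowSumNorm M * (‖v‖ + ‖w‖) := by
        gcongr
        · exact rowSumNorm_nonneg M
        · exact norm_add_le v w

theorem pdw_strict_dual_feasibility_general (p s : ℕ)
    (GSS : Matrix (Fin s) (Fin s) ℝ)
    (GScS : Matrix (Fin (p - s)) (Fin s) ℝ)
    (ξS zS : Fin s → ℝ) (ξSc : Fin (p - s) → ℝ)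
    (lamS lamSc η : ℝ)
    (hz : ‖zS‖ ≤ lamS)
    (hincoh : rowSumNorm (GScS * GSS⁻¹) ≤ 1 - η) :
    ‖ξSc - GScS *ᵥ (GSS⁻¹ *ᵥ (ξS + zS))‖ ≤
        (2 - η) * max ‖ξS‖ ‖ξSc‖ + (1 - η) * lamS ∧
      ((2 - η) * max ‖ξS‖ ‖ξSc‖ + (1 - η) * lamS < lamSc →
        ‖ξSc - GScS *ᵥ (GSS⁻¹ *ᵥ (ξS + zS))‖ < lamSc) := by
  have hη : 0 ≤ 1 - η := (rowSumNorm_nonneg _).trans hincoh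
  have bound : ‖ξSc - GScS *ᵥ (GSS⁻¹ *ᵥ (ξS + zS))‖ ≤
      (2 - η) * max ‖ξS‖ ‖ξSc‖ + (1 - η) * lamS :=
    calc ‖ξSc - GScS *ᵥ (GSS⁻¹ *ᵥ (ξS + zS))‖
        = ‖ξSc - (GScS * GSS⁻¹) *ᵥ (ξS + zS)‖ := by rw [mulVec_mulVec]
      _ ≤ ‖ξSc‖ + rowSumNorm (GScS * GSS⁻¹) * (‖ξS‖ + ‖zS‖) := norm_sub_mulVec_add_le _ _ _ _
      _ ≤ max ‖ξS‖ ‖ξSc‖ + (1 - η) * (max ‖ξS‖ ‖ξSc‖ + lamS) := by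
          gcongr
          · exact le_max_right _ _
          · exact le_max_left _ _
      _ = (2 - η) * max ‖ξS‖ ‖ξSc‖ + (1 - η) * lamS := by ring
  exact ⟨bound, bound.trans_lt⟩

/-- Primal–dual witness strict dual feasibility (proof of Theorem 3 of the
paper): with `G_SS` invertible, `‖z_S‖_∞ ≤ λ_S`, and the incoherence condition
`‖G_{S^cS} G_SS⁻¹‖_{∞→∞} ≤ 1 − η` for some `η ∈ (0,1)`, one has
`‖ξ_{S^c} − G_{S^cS} G_SS⁻¹ (ξ_S + z_S)‖_∞
  ≤ (2 − η) max(‖ξ_S‖_∞, ‖ξ_{S^c}‖_∞) + (1 − η) λ_S`;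
consequently, if `λ_{S^c}` exceeds that bound then
`‖ξ_{S^c} − G_{S^cS} G_SS⁻¹ (ξ_S + z_S)‖_∞ < λ_{S^c}`.
(Sup norms are the norms of the Pi types `Fin s → ℝ` and `Fin (p−s) → ℝ`.) -/
theorem pdw_strict_dual_feasibility (p s : ℕ) (hs : 0 < s) (hsp : s < p)
    (GSS : Matrix (Fin s) (Fin s) ℝ) (hGSS : IsUnit GSS.det)
    (GScS : Matrix (Fin (p - s)) (Fin s) ℝ)
    (ξS zS : Fin s → ℝ) (ξSc : Fin (p - s) → ℝ)
    (lamS lamSc η : ℝ) (hlamS : 0 ≤ lamS) (hlamSc : 0 < lamSc)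
    (hη : η ∈ Set.Ioo (0 : ℝ) 1)
    (hz : ‖zS‖ ≤ lamS)
    (hincoh : rowSumNorm (GScS * GSS⁻¹) ≤ 1 - η) :
    ‖ξSc - GScS *ᵥ (GSS⁻¹ *ᵥ (ξS + zS))‖ ≤
        (2 - η) * max ‖ξS‖ ‖ξSc‖ + (1 - η) * lamS ∧
      ((2 - η) * max ‖ξS‖ ‖ξSc‖ + (1 - η) * lamS < lamSc →
        ‖ξSc - GScS *ᵥ (GSS⁻¹ *ᵥ (ξS + zS))‖ < lamSc) :=
  pdw_strict_dual_feasibility_general p s GSS GScS ξS zS ξSc lamS lamSc η hz hincoh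
end
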